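/- Representability in F_{p,q}: let x = n × 2^m with n ∈ ℕ, m ∈ ℤ, and set c_x = max{0, e_min − m} where e_min = −2^{q−1} + 2. If 0 < n < 2^{1+p−c_x} and −p + e_min ≤ m ≤ −p + e_max with e_max = 2^{q−1} − 1, then x ∈ F_{p,q}. -/

import Mathlib

/-- The minimal exponent `e_min = -2^(q-1) + 2` of `F_{p,q}`. -/
def eMin (q : ℕ) : ℤ := -(2 : ℤ) ^ (q - 1) + 2

/-- The maximal exponent `e_max = 2^(q-1) - 1` of `F_{p,q}`. -/
def eMax (q : ℕ) : ℤ := (2 : ℤ) ^ (q - 1) - 1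

/-- `F_{p,q}`: floating-point numbers with `p`-bit significand fraction and
`q`-bit exponent: reals of the form `±m·2^(e-p)` with `0 ≤ m < 2^(p+1)`,
`e_min ≤ e ≤ e_max`, where `m < 2^p` (subnormals) is only allowed at
`e = e_min`; this includes `0`. -/
def Fpq (p q : ℕ) : Set ℝ :=
  {x | ∃ (s : ℤ) (m : ℕ) (e : ℤ), (s = 1 ∨ s = -1) ∧
    m < 2 ^ (p + 1) ∧ eMin q ≤ e ∧ e ≤ eMax q ∧ (2 ^ p ≤ m ∨ e = eMin q) ∧
    x = (s : ℝ) * m * (2 : ℝ) ^ (e - (p : ℤ))}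

/-!
With `e = m + p`, the number is `n · 2^(e-p)` with `n < 2^(p+1)` and `e_min ≤ e ≤ e_max`.
Such a pair `(n, e)` is already a valid encoding when `n` is normal or `e = e_min`; otherwise
`n < 2^p`, so `(2n, e - 1)` encodes the same number and we descend on `e` down to `e_min`.
-/

theorem natCast_mul_two_zpow_mem_Fpq {p q n : ℕ} {e : ℤ} (hn : n < 2 ^ (p + 1))
    (he : eMin q ≤ e) (he' : e ≤ eMax q) : (n : ℝ) * 2 ^ (e - p) ∈ Fpq p q := by
  induction e, he using Int.leInduction generalizing n with
  | base => exact ⟨1, n, eMin q, Or.inl rfl, hn, le_rfl, he', Or.inr rfl, by push_cast; ring⟩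
  | succ e he ih =>
    by_cases hnormal : 2 ^ p ≤ n
    · exact ⟨1, n, e + 1, Or.inl rfl, hn, by omega, he', Or.inl hnormal, by push_cast; ring⟩
    · have h2n : 2 * n < 2 ^ (p + 1) := by rw [pow_succ]; omega
      convert ih h2n (by omega) using 1
      rw [show e + 1 - p = e - p + 1 by ring, zpow_add_one₀ two_ne_zero]
      push_cast
      ring

theorem representable_Fpq_general (p q : ℕ) (n : ℕ) (m : ℤ)
    (h1 : (n : ℝ) < (2 : ℝ) ^ (1 + (p : ℤ) - max 0 (eMin q - m)))
    (h2 : -(p : ℤ) + eMin q ≤ m) (h3 : m ≤ -(p : ℤ) + eMax q) :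
    (n : ℝ) * (2 : ℝ) ^ m ∈ Fpq p q := by
  have hn : n < 2 ^ (p + 1) := by
    have hexp : 1 + (p : ℤ) - max 0 (eMin q - m) ≤ ((p + 1 : ℕ) : ℤ) := by
      push_cast
      linarith [le_max_left 0 (eMin q - m)]
    have : (n : ℝ) < 2 ^ ((p + 1 : ℕ) : ℤ) := h1.trans_le (zpow_le_zpow_right₀ one_le_two hexp)
    exact_mod_cast this
  simpa using natCast_mul_two_zpow_mem_Fpq (e := m + p) hn (by omega) (by omega)

/-- Representability in `F_{p,q}`: if `x = n·2^m` with `n ∈ ℕ`, `m ∈ ℤ`,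
`c_x = max{0, e_min - m}`, `0 < n < 2^(1+p-c_x)`, and
`-p + e_min ≤ m ≤ -p + e_max`, then `x ∈ F_{p,q}`. -/
theorem representable_Fpq (p q : ℕ) (n : ℕ) (m : ℤ)
    (h0 : 0 < n)
    (h1 : (n : ℝ) < (2 : ℝ) ^ (1 + (p : ℤ) - max 0 (eMin q - m)))
    (h2 : -(p : ℤ) + eMin q ≤ m) (h3 : m ≤ -(p : ℤ) + eMax q) :
    (n : ℝ) * (2 : ℝ) ^ m ∈ Fpq p q :=
  representable_Fpq_general p q n m h1 h2 h3
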